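/- arXiv:0810.1088 — 2 statements merged into one kernel-verified Lean document; each statement's English description precedes it below -/
import Mathlib

section
/- For a genus g hyperelliptic Lefschetz fibration with g ≥ 6 satisfying the signature bound σ ≤ n − s − 4, the number of separating vanishing cycles is at most the number of non-separating ones: s ≤ n. -/
/-!
A separating vanishing cycle of type `h` contributes `h (g - h) ≥ g - 1` to `x`, so
`x ≥ (g - 1) s`. Clearing the denominator `2g + 1` in the signature bound gives
`4x ≤ (3g + 2) n - 4 (2g + 1)`, hence `4 (g - 1) s < (3g + 2) n`, and `3g + 2 ≤ 4 (g - 1)`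
exactly when `g ≥ 6`.
-/

open Finset

theorem sub_one_le_mul_sub {R : Type*} [CommRing R] [LinearOrder R] [IsStrictOrderedRing R]
    {g h : R} (h1 : 1 ≤ h) (hg : h + 1 ≤ g) : g - 1 ≤ h * (g - h) := by
  nlinarith [mul_nonneg (sub_nonneg.mpr h1) (sub_nonneg.mpr hg)]

theorem sub_one_mul_sum_le_sum_mul_sub (g : ℕ) (sh : ℕ → ℕ) :
    ((g : ℚ) - 1) * ∑ h ∈ Icc 1 (g / 2), (sh h : ℚ)
      ≤ ∑ h ∈ Icc 1 (g / 2), (h : ℚ) * ((g : ℚ) - (h : ℚ)) * (sh h : ℚ) := by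
  rw [mul_sum]
  refine sum_le_sum fun h hh => mul_le_mul_of_nonneg_right ?_ (sh h).cast_nonneg
  obtain ⟨h1, h2⟩ := mem_Icc.mp hh
  have h2' : h + 1 ≤ g := by omega
  exact sub_one_le_mul_sub (by exact_mod_cast h1) (by exact_mod_cast h2')

theorem four_mul_le_of_signature_le {g n s x : ℚ} (hg : 0 ≤ g)
    (hbound : -((g + 1) / (2 * g + 1)) * n + 4 * x / (2 * g + 1) - s ≤ n - s - 4) :
    4 * x ≤ (3 * g + 2) * n - 4 * (2 * g + 1) := by
  have hD : 0 < 2 * g + 1 := by linarith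
  have key : (-(g + 1) * n + 4 * x) / (2 * g + 1) ≤ n - 4 := by
    have hsplit : (-(g + 1) * n + 4 * x) / (2 * g + 1)
        = -((g + 1) / (2 * g + 1)) * n + 4 * x / (2 * g + 1) := by ring
    linarith
  rw [div_le_iff₀ hD] at key
  linarith

theorem separating_le_nonseparating_general
    (g n : ℕ) (hg : 6 ≤ g)
    (sh : ℕ → ℕ)
    (s x σ : ℚ)
    (hs : s = ∑ h ∈ Finset.Icc 1 (g / 2), (sh h : ℚ))
    (hx : x = ∑ h ∈ Finset.Icc 1 (g / 2), (h : ℚ) * ((g : ℚ) - (h : ℚ)) * (sh h : ℚ))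
    (hσ : σ = -(((g : ℚ) + 1) / (2 * (g : ℚ) + 1)) * (n : ℚ)
            + 4 * x / (2 * (g : ℚ) + 1) - s)
    (hbound : σ ≤ (n : ℚ) - s - 4) :
    s ≤ (n : ℚ) := by
  have hgQ : (6 : ℚ) ≤ g := by exact_mod_cast hg
  have hxs : ((g : ℚ) - 1) * s ≤ x := hs ▸ hx ▸ sub_one_mul_sum_le_sum_mul_sub g sh
  have hx4 := four_mul_le_of_signature_le (by linarith) (hσ ▸ hbound)
  have hn6 : 0 ≤ ((g : ℚ) - 6) * n := mul_nonneg (by linarith) n.cast_nonneg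
  refine le_of_mul_le_mul_left ?_ (by linarith : (0 : ℚ) < 4 * (g - 1))
  calc 4 * ((g : ℚ) - 1) * s ≤ 4 * x := by linarith
    _ ≤ (3 * g + 2) * n := by linarith
    _ ≤ 4 * (g - 1) * n := by linarith

/-- For a genus `g ≥ 6` hyperelliptic Lefschetz fibration
satisfying the signature bound `σ ≤ n - s - 4`, the number of separating
vanishing cycles is at most the number of non-separating ones: `s ≤ n`. -/
theorem separating_le_nonseparating
    (g n : ℕ) (hg : 6 ≤ g) (hn : 0 < n)
    (sh : ℕ → ℕ)
    (s x σ : ℚ)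
    (hs : s = ∑ h ∈ Finset.Icc 1 (g / 2), (sh h : ℚ))
    (hx : x = ∑ h ∈ Finset.Icc 1 (g / 2), (h : ℚ) * ((g : ℚ) - (h : ℚ)) * (sh h : ℚ))
    (hσ : σ = -(((g : ℚ) + 1) / (2 * (g : ℚ) + 1)) * (n : ℚ)
            + 4 * x / (2 * (g : ℚ) + 1) - s)
    (hbound : σ ≤ (n : ℚ) - s - 4) :
    s ≤ (n : ℚ) :=
  separating_le_nonseparating_general g n hg sh s x σ hs hx hσ hbound
end

section
/- For a genus g hyperelliptic Lefschetz fibration the slope is given by λ = 12 − (n + s)/(χ_h + g − 1). -/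
/-!
Noether's formula `12 χ_h = c₁² + χ` follows from `c₁² = 2χ + 3σ` and `χ_h = (σ + χ)/4`, and with
`χ = n + s - 4(g - 1)` it turns the numerator of the slope into `12 (χ_h + g - 1) - (n + s)`.
Dividing by `χ_h + g - 1` gives the formula, once this denominator is known to be nonzero: it
equals `(n g + 4x) / (4(2g + 1))`, positive since `n, g > 0` and every term `h (g - h) s_h` of
`x` is nonnegative.
-/

section Field

variable {K : Type*} [Field K] [CharZero K]

theorem noether_formula {σ χ χh c₁sq : K} (hχh : χh = (σ + χ) / 4) (hc : c₁sq = 2 * χ + 3 * σ) :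
    c₁sq + χ = 12 * χh := by
  rw [hc, hχh]; ring

theorem slope_numerator_eq {g e σ χ χh c₁sq : K} (hχ : χ = e - 4 * (g - 1))
    (hχh : χh = (σ + χ) / 4) (hc : c₁sq = 2 * χ + 3 * σ) :
    c₁sq + 8 * (g - 1) = 12 * (χh + g - 1) - e := by
  linear_combination noether_formula hχh hc - hχ

theorem chiH_add_genus_sub_one_eq {g n s x σ χ χh : K} (hg : 2 * g + 1 ≠ 0)
    (hσ : σ = -((g + 1) / (2 * g + 1)) * n + 4 * x / (2 * g + 1) - s)
    (hχ : χ = n + s - 4 * (g - 1)) (hχh : χh = (σ + χ) / 4) :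
    χh + g - 1 = (n * g + 4 * x) / (2 * g + 1) / 4 := by
  rw [hχh, hσ, hχ]
  linear_combination (-n / 4) * mul_inv_cancel₀ hg

end Field

theorem sum_Icc_half_mul_sub_nonneg (g : ℕ) (sh : ℕ → ℕ) :
    0 ≤ ∑ h ∈ Finset.Icc 1 (g / 2), (h : ℚ) * ((g : ℚ) - (h : ℚ)) * (sh h : ℚ) := by
  refine Finset.sum_nonneg fun h hh ↦ ?_
  have h_le_g : (h : ℚ) ≤ g := by
    exact_mod_cast (Finset.mem_Icc.mp hh).2.trans (Nat.div_le_self g 2)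
  have : (0 : ℚ) ≤ g - h := sub_nonneg.mpr h_le_g
  positivity

theorem slope_general_formula_general
    (g n : ℕ) (hg : 2 ≤ g) (hn : 0 < n)
    (sh : ℕ → ℕ)
    (s x σ χ χh c₁sq lam : ℚ)
    (hx : x = ∑ h ∈ Finset.Icc 1 (g / 2), (h : ℚ) * ((g : ℚ) - (h : ℚ)) * (sh h : ℚ))
    (hσ : σ = -(((g : ℚ) + 1) / (2 * (g : ℚ) + 1)) * (n : ℚ)
            + 4 * x / (2 * (g : ℚ) + 1) - s)
    (hχ : χ = (n : ℚ) + s - 4 * ((g : ℚ) - 1))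
    (hχh : χh = (σ + χ) / 4)
    (hc : c₁sq = 2 * χ + 3 * σ)
    (hlam : lam = (c₁sq + 8 * ((g : ℚ) - 1)) / (χh + (g : ℚ) - 1)) :
    lam = 12 - ((n : ℚ) + s) / (χh + (g : ℚ) - 1) := by
  have hx_nonneg : 0 ≤ x := hx ▸ sum_Icc_half_mul_sub_nonneg g sh
  have hg_pos : (0 : ℚ) < g := by exact_mod_cast (by omega : 0 < g)
  have hn_pos : (0 : ℚ) < n := by exact_mod_cast hn
  have hD_pos : 0 < χh + (g : ℚ) - 1 := by
    rw [chiH_add_genus_sub_one_eq (by positivity) hσ hχ hχh]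
    positivity
  rw [hlam, sub_div' hD_pos.ne', slope_numerator_eq hχ hχh hc]

/-- For a genus `g` hyperelliptic Lefschetz fibration the
slope is given by `λ = 12 - (n + s)/(χ_h + g - 1)`. -/
theorem slope_general_formula
    (g n : ℕ) (hg : 2 ≤ g) (hn : 0 < n)
    (sh : ℕ → ℕ)
    (s x σ χ χh c₁sq lam : ℚ)
    (hs : s = ∑ h ∈ Finset.Icc 1 (g / 2), (sh h : ℚ))
    (hx : x = ∑ h ∈ Finset.Icc 1 (g / 2), (h : ℚ) * ((g : ℚ) - (h : ℚ)) * (sh h : ℚ))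
    (hσ : σ = -(((g : ℚ) + 1) / (2 * (g : ℚ) + 1)) * (n : ℚ)
            + 4 * x / (2 * (g : ℚ) + 1) - s)
    (hχ : χ = (n : ℚ) + s - 4 * ((g : ℚ) - 1))
    (hχh : χh = (σ + χ) / 4)
    (hc : c₁sq = 2 * χ + 3 * σ)
    (hlam : lam = (c₁sq + 8 * ((g : ℚ) - 1)) / (χh + (g : ℚ) - 1)) :
    lam = 12 - ((n : ℚ) + s) / (χh + (g : ℚ) - 1) :=
  slope_general_formula_general g n hg hn sh s x σ χ χh c₁sq lam hx hσ hχ hχh hc hlam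
end
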